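/- Bounds for the fluid solution (Lemma 1, properties 1, 3, and 5). Let α be a DDE initial condition with associated fluid solution (a,b). Then for all t ≥ 2h: a(t) ≥ 0, b(t) ≥ h, and 0 ≤ b(t) − a(t) ≤ 2h. -/

import Mathlib

/-! Differentiating `b (t + h) - a t` shows that it is constant, equal to `h`, so
`b t = a (t - h) + h` for `t ≥ 2h`. The function `a` stays positive since `a' = 1` at any
zero of `a`; then `b > 0` and `a' = 1 - 2a/b ≤ 1`, which gives `a ≤ b` and hence `a' ≥ -1`.
All bounds follow from `b t - a t = h - (a t - a (t - h))`. -/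

open MeasureTheory Set Topology

noncomputable section

/-- `α = (a_h, u)` is a DDE initial condition: `a_h > 0` and `u : [0,h] → ℝ` is
integrable with `0 ≤ u(t) ≤ 2`. -/
def IsDDEInit (h ah : ℝ) (u : ℝ → ℝ) : Prop :=
  0 < ah ∧ MeasureTheory.IntegrableOn u (Set.Icc 0 h) ∧
    ∀ t ∈ Set.Icc (0:ℝ) h, 0 ≤ u t ∧ u t ≤ 2

/-- `(a, b)` is the fluid solution associated to the DDE initial condition `(a_h, u)`:
`b(t) = a_h + t - h + ∫_{t-h}^h u(s) ds` on `[h, 2h]`, `a` solves `a′ = 1 - 2a/b` on `[h, 2h]`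
with `a(h) = a_h`, and for `t > 2h` the pair satisfies the delay differential equations
`a′(t) = 1 - 2a(t)/b(t)` and `b′(t) = 1 - 2a(t-h)/b(t-h)`. -/
def IsFluidSolution (h ah : ℝ) (u : ℝ → ℝ) (a b : ℝ → ℝ) : Prop :=
  ContinuousOn a (Set.Ici h) ∧ ContinuousOn b (Set.Ici h) ∧
  (∀ t ∈ Set.Icc h (2*h), b t = ah + t - h + ∫ s in (t-h)..h, u s) ∧
  a h = ah ∧
  (∀ t ∈ Set.Ioc h (2*h), HasDerivWithinAt a (1 - 2 * a t / b t) (Set.Icc h (2*h)) t) ∧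
  (∀ t, 2*h < t → HasDerivAt a (1 - 2 * a t / b t) t ∧
    HasDerivAt b (1 - 2 * a (t - h) / b (t - h)) t)

theorem monotoneOn_Ici_of_hasDerivAt_nonneg_of_ne {f f' : ℝ → ℝ} {p c : ℝ} (hpc : p ≤ c)
    (hf : ContinuousOn f (Ici p)) (hf' : ∀ x, p < x → x ≠ c → HasDerivAt f (f' x) x)
    (hf'₀ : ∀ x, p < x → x ≠ c → 0 ≤ f' x) : MonotoneOn f (Ici p) := by
  have hleft : MonotoneOn f (Icc p c) := by
    apply monotoneOn_of_hasDerivWithinAt_nonneg (f' := f') (convex_Icc p c)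
      (hf.mono Icc_subset_Ici_self) <;> rw [interior_Icc]
    · exact fun x hx => (hf' x hx.1 hx.2.ne).hasDerivWithinAt
    · exact fun x hx => hf'₀ x hx.1 hx.2.ne
  have hright : MonotoneOn f (Ici c) := by
    apply monotoneOn_of_hasDerivWithinAt_nonneg (f' := f') (convex_Ici c)
      (hf.mono (Ici_subset_Ici.2 hpc)) <;> rw [interior_Ici]
    · exact fun x hx => (hf' x (hpc.trans_lt hx) hx.ne').hasDerivWithinAt
    · exact fun x hx => hf'₀ x (hpc.trans_lt hx) hx.ne'
  rw [← Icc_union_Ici_eq_Ici hpc]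
  exact hleft.union_right hright (isGreatest_Icc hpc) isLeast_Ici

theorem eq_of_hasDerivAt_zero_of_ne {f : ℝ → ℝ} {p c : ℝ} (hpc : p ≤ c)
    (hf : ContinuousOn f (Ici p)) (hf' : ∀ x, p < x → x ≠ c → HasDerivAt f 0 x)
    {x : ℝ} (hx : p ≤ x) : f x = f p := by
  have hmono := monotoneOn_Ici_of_hasDerivAt_nonneg_of_ne hpc hf hf' fun _ _ _ => le_rfl
  have hanti := monotoneOn_Ici_of_hasDerivAt_nonneg_of_ne (f := fun x => -f x) hpc hf.neg
    (fun x hpx hxc => by simpa using (hf' x hpx hxc).fun_neg) fun _ _ _ => le_rfl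
  exact le_antisymm (neg_le_neg_iff.1 (hanti self_mem_Ici hx hx)) (hmono self_mem_Ici hx hx)

/-- At the first zero `t₀` of `g` the left difference quotients are nonpositive, so the left
derivative there cannot be positive. -/
theorem pos_of_hasDerivWithinAt_pos_at_zeros {g g' : ℝ → ℝ} {p : ℝ}
    (hg : ContinuousOn g (Ici p)) (hp : 0 < g p)
    (hg' : ∀ t, p < t → HasDerivWithinAt g (g' t) (Ioo p t) t)
    (hzero : ∀ t, p < t → g t = 0 → 0 < g' t) {t : ℝ} (ht : p ≤ t) : 0 < g t := by
  by_contra! hneg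
  set S := Ici p ∩ g ⁻¹' Iic 0
  have hSbdd : BddBelow S := ⟨p, fun _ hx => hx.1⟩
  have ht₀S : sInf S ∈ S :=
    (hg.preimage_isClosed_of_isClosed isClosed_Ici isClosed_Iic).csInf_mem ⟨t, ht, hneg⟩ hSbdd
  set t₀ := sInf S
  have hpt₀ : p < t₀ := ht₀S.1.lt_of_ne fun hpt => (hpt ▸ ht₀S.2 : g p ≤ 0).not_gt hp
  have hbefore : ∀ᶠ s in 𝓝[Ioo p t₀] t₀, 0 < g s ∧ s < t₀ := by
    filter_upwards [self_mem_nhdsWithin] with s hs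
    refine ⟨lt_of_not_ge fun hgs => ?_, hs.2⟩
    exact (csInf_le hSbdd ⟨hs.1.le, hgs⟩).not_gt hs.2
  have : (𝓝[Ioo p t₀] t₀).NeBot := right_nhdsWithin_Ioo_neBot hpt₀
  have hgt₀ : g t₀ = 0 :=
    le_antisymm ht₀S.2 <| ge_of_tendsto (hg' t₀ hpt₀).continuousWithinAt <|
      hbefore.mono fun _ hs => hs.1.le
  have hslope : ∀ᶠ s in 𝓝[Ioo p t₀] t₀, slope g t₀ s ≤ 0 :=
    hbefore.mono fun s hs => by
      rw [slope_def_field, hgt₀, sub_zero]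
      exact div_nonpos_of_nonneg_of_nonpos hs.1.le (sub_nonpos.2 hs.2.le)
  have hderiv := (hasDerivWithinAt_iff_tendsto_slope' fun hmem => hmem.2.false).1 (hg' t₀ hpt₀)
  exact (le_of_tendsto hderiv hslope).not_gt (hzero t₀ hpt₀ hgt₀)

namespace IsFluidSolution

variable {h ah : ℝ} {u a b : ℝ → ℝ}

theorem hasDerivAt_a (hs : IsFluidSolution h ah u a b) {t : ℝ} (ht : h < t) (ht' : t ≠ 2 * h) :
    HasDerivAt a (1 - 2 * a t / b t) t := by
  obtain ⟨-, -, -, -, hd, hd'⟩ := hs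
  rcases ht'.lt_or_gt with hlt | hgt
  · exact (hd t ⟨ht, hlt.le⟩).hasDerivAt (Icc_mem_nhds ht hlt)
  · exact (hd' t hgt).1

theorem hasDerivWithinAt_a_Ioo (hs : IsFluidSolution h ah u a b) {t : ℝ} (ht : h < t) :
    HasDerivWithinAt a (1 - 2 * a t / b t) (Ioo h t) t := by
  obtain ⟨-, -, -, -, hd, hd'⟩ := hs
  rcases le_or_gt t (2 * h) with hle | hgt
  · exact (hd t ⟨ht, hle⟩).mono fun s hs => ⟨hs.1.le, hs.2.le.trans hle⟩
  · exact (hd' t hgt).1.hasDerivWithinAt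

theorem a_pos (hs : IsFluidSolution h ah u a b) (hα : IsDDEInit h ah u) {t : ℝ} (ht : h ≤ t) :
    0 < a t := by
  refine pos_of_hasDerivWithinAt_pos_at_zeros hs.1 ?_ (fun _ => hs.hasDerivWithinAt_a_Ioo)
    (fun t _ hat => by simp [hat]) ht
  rw [hs.2.2.2.1]
  exact hα.1

theorem b_two_mul (hs : IsFluidSolution h ah u a b) (hh : 0 ≤ h) : b (2 * h) = ah + h := by
  obtain ⟨-, -, hb, -⟩ := hs
  rw [hb (2 * h) ⟨by linarith, le_rfl⟩, show 2 * h - h = h by ring,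
    intervalIntegral.integral_same]
  ring

theorem b_eq_a_sub_add (hs : IsFluidSolution h ah u a b) (hh : 0 ≤ h) {t : ℝ}
    (ht : 2 * h ≤ t) : b t = a (t - h) + h := by
  have hcont : ContinuousOn (fun s => b (s + h) - a s) (Ici h) :=
    (hs.2.1.comp (continuous_add_const h).continuousOn
      fun s (hsh : h ≤ s) => (by linarith : h ≤ s + h)).sub hs.1
  have hderiv : ∀ s, h < s → s ≠ 2 * h → HasDerivAt (fun s => b (s + h) - a s) 0 s := by
    intro s hs₁ hs₂
    have hb := ((hs.2.2.2.2.2 (s + h) (by linarith)).2.comp_add_const s h).fun_sub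
      (hs.hasDerivAt_a hs₁ hs₂)
    simpa only [add_sub_cancel_right, sub_self] using hb
  have hconst := eq_of_hasDerivAt_zero_of_ne (by linarith) hcont hderiv
    (show h ≤ t - h by linarith)
  simp only [sub_add_cancel, show h + h = 2 * h by ring, hs.b_two_mul hh, hs.2.2.2.1] at hconst
  linarith

theorem ah_add_sub_le_b (hs : IsFluidSolution h ah u a b) (hα : IsDDEInit h ah u) {t : ℝ}
    (ht : t ∈ Icc h (2 * h)) : ah + (t - h) ≤ b t := by
  have hint : 0 ≤ ∫ s in (t - h)..h, u s :=
    intervalIntegral.integral_nonneg (by linarith [ht.2])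
      fun s hs => (hα.2.2 s ⟨by linarith [hs.1, ht.1], hs.2⟩).1
  rw [hs.2.2.1 t ht]
  linarith

theorem b_pos (hs : IsFluidSolution h ah u a b) (hh : 0 ≤ h) (hα : IsDDEInit h ah u) {t : ℝ}
    (ht : h ≤ t) : 0 < b t := by
  rcases le_or_gt t (2 * h) with hle | hgt
  · linarith [hs.ah_add_sub_le_b hα ⟨ht, hle⟩, hα.1]
  · rw [hs.b_eq_a_sub_add hh hgt.le]
    linarith [hs.a_pos hα (show h ≤ t - h by linarith)]

theorem a_sub_a_le (hs : IsFluidSolution h ah u a b) (hh : 0 ≤ h) (hα : IsDDEInit h ah u)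
    {s t : ℝ} (hs' : h ≤ s) (hst : s ≤ t) : a t - a s ≤ t - s := by
  have hmono : MonotoneOn (fun x => x - a x) (Ici h) := by
    refine monotoneOn_Ici_of_hasDerivAt_nonneg_of_ne (by linarith : h ≤ 2 * h)
      (continuousOn_id.sub hs.1)
      (fun x hx hx' => (hasDerivAt_id x).sub (hs.hasDerivAt_a hx hx'))
      fun x hx _ => ?_
    have : 0 ≤ 2 * a x / b x :=
      div_nonneg (by linarith [hs.a_pos hα hx.le]) (hs.b_pos hh hα hx.le).le
    linarith
  have := hmono hs' (hs'.trans hst) hst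
  dsimp only at this
  linarith

theorem a_le_b (hs : IsFluidSolution h ah u a b) (hh : 0 ≤ h) (hα : IsDDEInit h ah u) {t : ℝ}
    (ht : h ≤ t) : a t ≤ b t := by
  rcases le_or_gt t (2 * h) with hle | hgt
  · have := hs.a_sub_a_le hh hα le_rfl ht
    rw [hs.2.2.2.1] at this
    linarith [hs.ah_add_sub_le_b hα ⟨ht, hle⟩]
  · rw [hs.b_eq_a_sub_add hh hgt.le]
    linarith [hs.a_sub_a_le hh hα (show h ≤ t - h by linarith) (sub_le_self t hh)]

theorem sub_le_a_sub_a (hs : IsFluidSolution h ah u a b) (hh : 0 ≤ h) (hα : IsDDEInit h ah u)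
    {s t : ℝ} (hs' : h ≤ s) (hst : s ≤ t) : s - t ≤ a t - a s := by
  have hmono : MonotoneOn (fun x => x + a x) (Ici h) := by
    refine monotoneOn_Ici_of_hasDerivAt_nonneg_of_ne (by linarith : h ≤ 2 * h)
      (continuousOn_id.add hs.1)
      (fun x hx hx' => (hasDerivAt_id x).add (hs.hasDerivAt_a hx hx'))
      fun x hx _ => ?_
    have : 2 * a x / b x ≤ 2 := by
      rw [div_le_iff₀ (hs.b_pos hh hα hx.le)]
      linarith [hs.a_le_b hh hα hx.le]
    linarith
  have := hmono hs' (hs'.trans hst) hst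
  dsimp only at this
  linarith

end IsFluidSolution

/-- **Lemma 1, properties 1, 3 and 5 (bounds for the fluid solution).**
If `(a, b)` is the fluid solution associated to a DDE initial condition, then for all
`t ≥ 2h`: `a(t) ≥ 0`, `b(t) ≥ h`, and `0 ≤ b(t) - a(t) ≤ 2h`. -/
theorem fluid_solution_bounds
    (h ah : ℝ) (u : ℝ → ℝ) (hh : 0 < h) (hα : IsDDEInit h ah u)
    (a b : ℝ → ℝ) (hfluid : IsFluidSolution h ah u a b) :
    ∀ t : ℝ, 2*h ≤ t →
      0 ≤ a t ∧ h ≤ b t ∧ 0 ≤ b t - a t ∧ b t - a t ≤ 2*h := by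
  intro t ht
  have hth : h ≤ t - h := by linarith
  have hb := hfluid.b_eq_a_sub_add hh.le ht
  have ha := hfluid.a_pos hα (by linarith : h ≤ t)
  have ha' := hfluid.a_pos hα hth
  have hab := hfluid.a_le_b hh.le hα (by linarith : h ≤ t)
  have hlip := hfluid.sub_le_a_sub_a hh.le hα hth (sub_le_self t hh.le)
  exact ⟨ha.le, by linarith, by linarith, by linarith⟩
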